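/- arXiv:2505.21111 — 2 statements merged into one kernel-verified Lean document; each statement's English description precedes it below -/
import Mathlib

section
/- In the formal power series ring ℤ[x,y][[q]], the series ∑_{(μ,ν)} m(μ)·m(ν)·x^{ℓ_d(μ)+ℓ_d(ν)}·y^{2ℓ_r(μ,ν)}·q^{|μ|+|ν|}, summed over all ordered pairs (μ,ν) of partitions into odd parts (including the empty partition), equals the infinite product ∏_{m≥1} ( 1 + 2x·q^{2m−1}/(1−q^{2m−1})² + x²y²·q^{2(2m−1)}/(1−q^{2m−1})⁴ ). -/
/-- The coefficient ring `ℤ[x,y]`. -/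
noncomputable abbrev Rxy : Type := MvPolynomial (Fin 2) ℤ

/-- The variable `x` of `ℤ[x,y]`. -/
noncomputable def xv : Rxy := MvPolynomial.X 0

/-- The variable `y` of `ℤ[x,y]`. -/
noncomputable def yv : Rxy := MvPolynomial.X 1

/-- `m(λ)`: the product of the multiplicities of the distinct part sizes of a partition,
i.e. the number of PDO designations of `λ`. -/
def pdoWeight {n : ℕ} (l : n.Partition) : ℕ :=
  ∏ a ∈ l.parts.toFinset, l.parts.count a

/-- `ℓ_d(λ)`: the number of distinct part sizes of a partition. -/
def numDistinct {n : ℕ} (l : n.Partition) : ℕ :=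
  l.parts.toFinset.card

/-- `ℓ_r(μ,ν)`: the number of part sizes occurring in both `μ` and `ν`. -/
def numCommon {a b : ℕ} (mu : a.Partition) (nu : b.Partition) : ℕ :=
  (mu.parts.toFinset ∩ nu.parts.toFinset).card

/-- The series `∑_{(μ,ν)} m(μ) m(ν) x^{ℓ_d(μ)+ℓ_d(ν)} y^{2ℓ_r(μ,ν)} q^{|μ|+|ν|}` over ordered
pairs of partitions into odd parts, i.e. `P₂(x,y,q)`: the coefficient of `q^n` collects all
pairs with `|μ| + |ν| = n`. -/
noncomputable def P2 : PowerSeries Rxy :=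
  PowerSeries.mk fun n =>
    ∑ k ∈ Finset.range (n + 1),
      ∑ mu ∈ Nat.Partition.odds k,
        ∑ nu ∈ Nat.Partition.odds (n - k),
          (pdoWeight mu * pdoWeight nu : Rxy) *
            xv ^ (numDistinct mu + numDistinct nu) * yv ^ (2 * numCommon mu nu)

/-- The `m`-th factor (`m ≥ 1`) of the product:
`1 + 2x q^{2m-1}/(1-q^{2m-1})² + x²y² q^{2(2m-1)}/(1-q^{2m-1})⁴`.
`Ring.inverse` yields the genuine inverse since `1 - q^{2m-1}` is a unit. -/
noncomputable def factor2 (m : ℕ) : PowerSeries Rxy :=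
  1 +
    2 * PowerSeries.C (R := Rxy) xv * PowerSeries.X ^ (2 * m - 1) *
      Ring.inverse ((1 - PowerSeries.X ^ (2 * m - 1)) ^ 2) +
    PowerSeries.C (R := Rxy) (xv ^ 2 * yv ^ 2) * PowerSeries.X ^ (2 * (2 * m - 1)) *
      Ring.inverse ((1 - PowerSeries.X ^ (2 * m - 1)) ^ 4)

/-- The infinite product `∏_{m ≥ 1} factor2 m`, defined coefficientwise: since
`factor2 m = 1 + O(q^{2m-1})`, the coefficient of `q^n` is that of any sufficiently long
partial product, e.g. `∏_{m=1}^{n+1}`. -/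
noncomputable def prod2 : PowerSeries Rxy :=
  PowerSeries.mk fun n =>
    PowerSeries.coeff (R := Rxy) n (∏ m ∈ Finset.range (n + 1), factor2 (m + 1))

/-!
Record a pair `(μ, ν)` of partitions by the multiplicities `(jₐ, kₐ)` of each part size `a`.
The summand `m(μ) m(ν) x^{ℓ_d(μ)+ℓ_d(ν)} y^{2ℓ_r(μ,ν)}` is then `∏ₐ w(jₐ, kₐ)` with
`w(j, k) = (j x)^{[j>0]} (k x)^{[k>0]} y^{2[j>0][k>0]}`. So the bivariate generating function
`∑ weight · s^{|μ|} t^{|ν|}` of pairs with parts in a finite set `S` is the product over `a ∈ S` of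
`∑_{j,k} w(j,k) s^{aj} t^{ak}`, and setting `s = t = q` turns it into `∏_{a ∈ S} Φ(q^a)`, where
`Φ(t) = ∑_{j,k} w(j,k) t^{j+k} = (1 + xG)² + x²(y² - 1)G²` and `G = ∑ j t^j = t/(1-t)²`.
Taking `S` to be the odd numbers up to `2n+1` gives the coefficient of `q^n` on both sides.
-/

open Finset PowerSeries

section DiagonalSeries

variable {R : Type*} [CommSemiring R]

/- A function `f : ℕ → ℕ → R` stands for the bivariate series `∑ f k l s^k t^l`: `diagSeries f`
is its value at `s = t = X`, `conv₂` is the product of bivariate series, and `dilate a f` is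
`f(s^a, t^a)`. -/

noncomputable def diagSeries (f : ℕ → ℕ → R) : R⟦X⟧ :=
  PowerSeries.mk fun n => ∑ p ∈ antidiagonal n, f p.1 p.2

def conv₂ (f g : ℕ → ℕ → R) (k l : ℕ) : R :=
  ∑ p ∈ antidiagonal k, ∑ q ∈ antidiagonal l, f p.1 q.1 * g p.2 q.2

def dilate (a : ℕ) (f : ℕ → ℕ → R) (k l : ℕ) : R :=
  if a ∣ k ∧ a ∣ l then f (k / a) (l / a) else 0

theorem diagSeries_conv₂ (f g : ℕ → ℕ → R) :
    diagSeries (conv₂ f g) = diagSeries f * diagSeries g := by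
  ext n
  simp only [diagSeries, conv₂, coeff_mk, coeff_mul, sum_mul_sum, sum_sigma']
  let swap : (_ : ℕ × ℕ) × (_ : ℕ × ℕ) × (ℕ × ℕ) → (_ : ℕ × ℕ) × (_ : ℕ × ℕ) × (ℕ × ℕ) :=
    fun ⟨_, (i, i'), (j, j')⟩ => ⟨(i + j, i' + j'), (i, j), (i', j')⟩
  refine sum_nbij' swap swap ?_ ?_ ?_ ?_ ?_ <;>
    rintro ⟨⟨k, l⟩, ⟨i, i'⟩, ⟨j, j'⟩⟩ h <;>
    simp_all [swap, mem_sigma, HasAntidiagonal.mem_antidiagonal] <;> omega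

end DiagonalSeries

namespace Multiset

variable {α : Type*} [DecidableEq α]

theorem filter_ne_add_replicate_count (m : Multiset α) (a : α) :
    m.filter (· ≠ a) + replicate (m.count a) a = m := by
  rw [← filter_eq', add_comm]
  simpa [eq_comm] using filter_add_not (· = a) m

theorem count_add_replicate_self {m : Multiset α} {a : α} (h : a ∉ m) (j : ℕ) :
    (m + replicate j a).count a = j := by
  simp [count_eq_zero_of_notMem h]

theorem filter_ne_add_replicate {m : Multiset α} {a : α} (h : a ∉ m) (j : ℕ) :
    (m + replicate j a).filter (· ≠ a) = m := by
  rw [filter_add, filter_eq_self.mpr fun i hi => ne_of_mem_of_not_mem hi h,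
    filter_eq_nil.mpr fun i hi hia => hia (eq_of_mem_replicate hi), add_zero]

end Multiset

namespace Nat.Partition

theorem heq_of_parts_eq {m n : ℕ} (h : m = n) {μ : m.Partition} {ν : n.Partition}
    (hp : μ.parts = ν.parts) : HEq μ ν := by
  subst h
  exact heq_of_eq (Nat.Partition.ext hp)

theorem sum_filter_ne_add_mul_count {K : ℕ} (μ : K.Partition) (a : ℕ) :
    (μ.parts.filter (· ≠ a)).sum + a * μ.parts.count a = K := by
  conv_rhs => rw [← μ.parts_sum, ← Multiset.filter_ne_add_replicate_count μ.parts a]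
  simp [mul_comm]

theorem toFinset_parts_subset_of_mem_restricted {k : ℕ} {s : Finset ℕ} {μ : k.Partition}
    (h : μ ∈ restricted k (· ∈ s)) : μ.parts.toFinset ⊆ s :=
  fun i hi => (mem_filter.mp h).2 i (Multiset.mem_toFinset.mp hi)

theorem sum_restricted_insert {M : Type*} [AddCommMonoid M] {s : Finset ℕ} {a : ℕ}
    (ha : a ≠ 0) (has : a ∉ s) (K : ℕ) (f : Multiset ℕ → M) :
    ∑ μ ∈ restricted K (· ∈ insert a s), f μ.parts =
      ∑ p ∈ antidiagonal K, if a ∣ p.1 then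
        ∑ μ ∈ restricted p.2 (· ∈ s), f (μ.parts + Multiset.replicate (p.1 / a) a) else 0 := by
  have hdiv (i : ℕ) : a * i / a = i := Nat.mul_div_cancel_left i (Nat.pos_of_ne_zero ha)
  have mem_sigma_iff (x : (_ : ℕ × ℕ) × Nat.Partition _) :
      x ∈ ((antidiagonal K).filter (a ∣ ·.1)).sigma (fun p => restricted p.2 (· ∈ s)) ↔
        (x.1.1 + x.1.2 = K ∧ a ∣ x.1.1) ∧ ∀ i ∈ x.2.parts, i ∈ s := by
    simp [restricted, HasAntidiagonal.mem_antidiagonal]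
  rw [← sum_filter, sum_sigma']
  refine sum_bij'
    (fun μ _ => ⟨(a * μ.parts.count a, K - a * μ.parts.count a),
      ⟨μ.parts.filter (· ≠ a), fun h => μ.parts_pos (Multiset.mem_of_mem_filter h),
        by have := sum_filter_ne_add_mul_count μ a; omega⟩⟩)
    (fun x hx => ⟨x.2.parts + Multiset.replicate (x.1.1 / a) a,
      fun hi => (Multiset.mem_add.mp hi).elim x.2.parts_pos
        fun hi => Multiset.eq_of_mem_replicate hi ▸ Nat.pos_of_ne_zero ha, by
        obtain ⟨⟨hK, ⟨j, hj⟩⟩, -⟩ := (mem_sigma_iff x).mp hx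
        simp [x.2.parts_sum, hj, hdiv, mul_comm j a]; omega⟩) ?_ ?_ ?_ ?_ ?_
  · intro μ hμ
    rw [mem_sigma_iff]
    dsimp only
    refine ⟨⟨by have := sum_filter_ne_add_mul_count μ a; omega, dvd_mul_right a _⟩,
      fun i hi => ?_⟩
    obtain ⟨hi, hia⟩ := Multiset.mem_filter.mp hi
    exact (mem_insert.mp ((mem_filter.mp hμ).2 i hi)).resolve_left hia
  · intro x hx
    refine mem_filter.mpr ⟨mem_univ _, fun i hi => ?_⟩
    rcases Multiset.mem_add.mp hi with hi | hi
    · exact mem_insert_of_mem (((mem_sigma_iff x).mp hx).2 i hi)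
    · exact Multiset.eq_of_mem_replicate hi ▸ mem_insert_self a s
  · intro μ _
    exact Nat.Partition.ext (by simp [hdiv, Multiset.filter_ne_add_replicate_count])
  · rintro ⟨⟨d, k⟩, ν⟩ hx
    obtain ⟨⟨hK, j, hj⟩, hν⟩ := (mem_sigma_iff _).mp hx
    dsimp only at hK hj hν ⊢
    subst hj
    have haν : a ∉ ν.parts := fun h => has (hν a h)
    have hk : K - a * j = k := by omega
    refine Sigma.ext (Prod.ext ?_ ?_) (heq_of_parts_eq ?_ ?_) <;>
      simp only [hdiv, Multiset.count_add_replicate_self haν, Multiset.filter_ne_add_replicate haν,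
        hk]
  · intro μ _
    simp [hdiv, Multiset.filter_ne_add_replicate_count]

theorem card_restricted_mem_empty (k : ℕ) :
    #(restricted k (· ∈ (∅ : Finset ℕ))) = if k = 0 then 1 else 0 := by
  rcases k with _ | k
  · simp [restricted]
  · rw [if_neg k.succ_ne_zero, Finset.card_eq_zero, restricted, filter_eq_empty_iff]
    intro μ _ h
    have hne : μ.parts ≠ 0 := fun h0 => by simpa [h0] using μ.parts_sum
    obtain ⟨i, hi⟩ := Multiset.exists_mem_of_ne_zero hne
    exact notMem_empty i (h i hi)

theorem restricted_congr {k : ℕ} {p q : ℕ → Prop} [DecidablePred p] [DecidablePred q]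
    (h : ∀ i, 0 < i → i ≤ k → (p i ↔ q i)) : restricted k p = restricted k q :=
  filter_congr fun μ _ => forall₂_congr fun i hi =>
    h i (μ.parts_pos hi) (le_of_mem_parts hi)

end Nat.Partition

open Nat.Partition

section PairSum

variable {R : Type*} [CommSemiring R]

def pairSum (W : ℕ → ℕ → R) (s : Finset ℕ) (k l : ℕ) : R :=
  ∑ μ ∈ restricted k (· ∈ s), ∑ ν ∈ restricted l (· ∈ s),
    ∏ i ∈ s, W (μ.parts.count i) (ν.parts.count i)

theorem diagSeries_pairSum_empty (W : ℕ → ℕ → R) : diagSeries (pairSum W ∅) = 1 := by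
  ext n
  simp only [diagSeries, pairSum, prod_empty, sum_const, card_restricted_mem_empty, coeff_mk,
    coeff_one]
  rcases n with _ | n
  · simp
  · refine sum_eq_zero fun p hp => ?_
    have : p.1 ≠ 0 ∨ p.2 ≠ 0 := by
      have := HasAntidiagonal.mem_antidiagonal.mp hp
      omega
    rcases this with h | h <;> simp [h]

theorem pairSum_insert (W : ℕ → ℕ → R) {s : Finset ℕ} {a : ℕ} (ha : a ≠ 0) (has : a ∉ s) :
    pairSum W (insert a s) = conv₂ (dilate a W) (pairSum W s) := by
  ext k l
  calc pairSum W (insert a s) k l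
      = ∑ p ∈ antidiagonal k, if a ∣ p.1 then ∑ μ ∈ restricted p.2 (· ∈ s),
          ∑ q ∈ antidiagonal l, if a ∣ q.1 then ∑ ν ∈ restricted q.2 (· ∈ s),
            ∏ i ∈ insert a s, W ((μ.parts + Multiset.replicate (p.1 / a) a).count i)
              ((ν.parts + Multiset.replicate (q.1 / a) a).count i) else 0 else 0 := by
        refine (sum_restricted_insert ha has k fun m => ∑ ν ∈ restricted l (· ∈ insert a s),
          ∏ i ∈ insert a s, W (m.count i) (ν.parts.count i)).trans ?_
        refine sum_congr rfl fun p _ => ?_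
        split_ifs
        · exact sum_congr rfl fun μ _ => sum_restricted_insert ha has l fun m =>
            ∏ i ∈ insert a s, W ((μ.parts + Multiset.replicate (p.1 / a) a).count i) (m.count i)
        · rfl
    _ = conv₂ (dilate a W) (pairSum W s) k l := by
        refine sum_congr rfl fun p _ => ?_
        simp only [dilate]
        split_ifs with hp
        · rw [sum_comm]
          refine sum_congr rfl fun q _ => ?_
          by_cases hq : a ∣ q.1
          · simp only [if_pos hq, if_pos (And.intro hp hq), pairSum, mul_sum]
            refine sum_congr rfl fun μ hμ => sum_congr rfl fun ν hν => ?_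
            have haμ : a ∉ μ.parts := fun h => has ((mem_filter.mp hμ).2 a h)
            have haν : a ∉ ν.parts := fun h => has ((mem_filter.mp hν).2 a h)
            rw [prod_insert has, Multiset.count_add_replicate_self haμ,
              Multiset.count_add_replicate_self haν]
            refine congrArg _ (prod_congr rfl fun i hi => ?_)
            simp [Multiset.count_replicate, (ne_of_mem_of_not_mem hi has).symm]
          · simp [hp, hq]
        · simp [hp]

end PairSum

section PairWeight

variable {R : Type*} [CommSemiring R]

def multWeight (x : R) (j : ℕ) : R :=
  if j = 0 then 1 else j * x

def pairWeight (x y : R) (j k : ℕ) : R :=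
  multWeight x j * multWeight x k * if j = 0 ∨ k = 0 then 1 else y ^ 2

theorem prod_multWeight_count {s : Finset ℕ} {n : ℕ} {μ : n.Partition}
    (hμ : μ.parts.toFinset ⊆ s) (x : R) :
    ∏ i ∈ s, multWeight x (μ.parts.count i) = pdoWeight μ * x ^ numDistinct μ := by
  simp_rw [multWeight, Multiset.count_eq_zero, ← Multiset.mem_toFinset, ite_not]
  rw [prod_ite_mem, inter_eq_right.mpr hμ, prod_mul_distrib, prod_const, pdoWeight, numDistinct,
    Nat.cast_prod]

theorem prod_pairWeight_count {s : Finset ℕ} {k l : ℕ} {μ : k.Partition} {ν : l.Partition}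
    (hμ : μ.parts.toFinset ⊆ s) (hν : ν.parts.toFinset ⊆ s) (x y : R) :
    ∏ i ∈ s, pairWeight x y (μ.parts.count i) (ν.parts.count i) =
      (pdoWeight μ * pdoWeight ν : R) * x ^ (numDistinct μ + numDistinct ν) *
        y ^ (2 * numCommon μ ν) := by
  have hcommon : ∏ i ∈ s, (if μ.parts.count i = 0 ∨ ν.parts.count i = 0 then 1 else y ^ 2) =
      y ^ (2 * numCommon μ ν) := by
    simp_rw [Multiset.count_eq_zero, ← not_and_or, ← Multiset.mem_toFinset, ← mem_inter, ite_not]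
    rw [prod_ite_mem, inter_eq_right.mpr (inter_subset_left.trans hμ), prod_const, numCommon,
      pow_mul]
  simp only [pairWeight, prod_mul_distrib, prod_multWeight_count hμ, prod_multWeight_count hν,
    hcommon]
  ring

end PairWeight

theorem map_ringInverse {M N F : Type*} [MonoidWithZero M] [MonoidWithZero N] [FunLike F M N]
    [MonoidHomClass F M N] (f : F) {u : M} (hu : IsUnit u) :
    f (Ring.inverse u) = Ring.inverse (f u) := by
  obtain ⟨u, rfl⟩ := hu
  rw [Ring.inverse_unit, ← MonoidHom.coe_coe, ← Units.coe_map, ← Units.coe_map, Ring.inverse_unit,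
    map_inv]

section CommRing

variable {R : Type*} [CommRing R]

theorem diagSeries_dilate {a : ℕ} (ha : a ≠ 0) (f : ℕ → ℕ → R) :
    diagSeries (dilate a f) = subst (X ^ a) (diagSeries f) := by
  ext n
  have hdiv (i : ℕ) : a * i / a = i := Nat.mul_div_cancel_left i (Nat.pos_of_ne_zero ha)
  rw [coeff_subst_X_pow ha, Algebra.algebraMap_self, RingHom.id_apply]
  simp only [diagSeries, coeff_mk, dilate]
  split_ifs with hn
  · obtain ⟨n, rfl⟩ := hn
    refine (sum_of_injOn (fun q => (a * q.1, a * q.2)) ?_ ?_ ?_ ?_).symm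
    · rintro ⟨i, j⟩ - ⟨i', j'⟩ - h
      simp_all
    · rintro ⟨i, j⟩ h
      simp_all [HasAntidiagonal.mem_antidiagonal, ← mul_add]
    · rintro ⟨k, l⟩ hkl hne
      rw [if_neg]
      rintro ⟨⟨i, rfl⟩, ⟨j, rfl⟩⟩
      refine hne ⟨(i, j), ?_, rfl⟩
      simp_all [HasAntidiagonal.mem_antidiagonal, ← mul_add]
    · intro q _
      simp [hdiv]
  · refine sum_eq_zero fun p hp => if_neg ?_
    rintro ⟨h1, h2⟩
    exact hn (HasAntidiagonal.mem_antidiagonal.mp hp ▸ dvd_add h1 h2)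

theorem diagSeries_pairSum (W : ℕ → ℕ → R) {s : Finset ℕ} (hs : 0 ∉ s) :
    diagSeries (pairSum W s) = ∏ a ∈ s, subst (X ^ a) (diagSeries W) := by
  induction s using Finset.induction_on with
  | empty => exact diagSeries_pairSum_empty W
  | insert a s has ih =>
    have ha : a ≠ 0 := fun h => hs (h ▸ mem_insert_self a s)
    rw [pairSum_insert W ha has, diagSeries_conv₂, diagSeries_dilate ha, prod_insert has,
      ih fun h => hs (mem_insert_of_mem h)]

theorem isUnit_one_sub_X_pow (d : ℕ) : IsUnit ((1 - X : R⟦X⟧) ^ d) := by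
  rw [← invOneSubPow_inv_eq_one_sub_pow, Units.inv_eq_val_inv]
  exact Units.isUnit _

theorem X_mul_inverse_one_sub_X_sq :
    X * Ring.inverse ((1 - X : R⟦X⟧) ^ 2) = PowerSeries.mk fun n => (n : R) := by
  rw [← invOneSubPow_inv_eq_one_sub_pow, Units.inv_eq_val_inv, Ring.inverse_unit, inv_inv]
  ext (_ | n)
  · simp
  · simp [coeff_succ_X_mul, invOneSubPow_val_eq_mk_sub_one_add_choose_of_pos, add_comm]

theorem pairWeight_eq_add (x y : R) (j k : ℕ) :
    pairWeight x y j k = multWeight x j * multWeight x k + (j * k : R) * (x ^ 2 * (y ^ 2 - 1)) := by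
  unfold pairWeight multWeight
  rcases eq_or_ne j 0 with rfl | hj
  · simp
  rcases eq_or_ne k 0 with rfl | hk
  · simp
  simp only [hj, hk, or_self, if_false]
  ring

theorem diagSeries_pairWeight (x y : R) :
    diagSeries (pairWeight x y) = 1 + 2 * C x * X * Ring.inverse ((1 - X) ^ 2) +
      C (x ^ 2 * y ^ 2) * X ^ 2 * Ring.inverse ((1 - X) ^ 4) := by
  set G : R⟦X⟧ := X * Ring.inverse ((1 - X) ^ 2) with hG
  have hψ : 1 + C x * G = PowerSeries.mk (multWeight x) := by
    ext n
    rw [hG, X_mul_inverse_one_sub_X_sq]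
    rcases eq_or_ne n 0 with rfl | hn <;> simp [multWeight, coeff_one, *, mul_comm]
  have hsplit : diagSeries (pairWeight x y) =
      (1 + C x * G) * (1 + C x * G) + C (x ^ 2 * (y ^ 2 - 1)) * (G * G) := by
    ext n
    rw [hψ, hG, X_mul_inverse_one_sub_X_sq, diagSeries, coeff_mk, map_add, coeff_C_mul, coeff_mul,
      coeff_mul, mul_sum, ← sum_add_distrib]
    exact sum_congr rfl fun p _ => by simp only [pairWeight_eq_add, coeff_mk]; ring
  have hinv : Ring.inverse ((1 - X : R⟦X⟧) ^ 4) = Ring.inverse ((1 - X) ^ 2) ^ 2 := by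
    rw [Ring.inverse_pow, ← pow_mul]
  rw [hsplit, hinv, hG]
  simp only [map_mul, map_pow, map_sub, map_one]
  ring

end CommRing

theorem factor2_succ (m : ℕ) :
    factor2 (m + 1) = subst (X ^ (2 * m + 1)) (diagSeries (pairWeight xv yv)) := by
  have ha : 2 * m + 1 ≠ 0 := by omega
  have hinv (e : ℕ) : Ring.inverse ((1 - X ^ (2 * m + 1) : PowerSeries Rxy) ^ e) =
      expand (2 * m + 1) ha (Ring.inverse ((1 - X) ^ e)) := by
    rw [map_ringInverse _ (isUnit_one_sub_X_pow e)]
    simp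
  rw [← expand_apply _ ha, diagSeries_pairWeight, factor2,
    show 2 * (m + 1) - 1 = 2 * m + 1 by omega, hinv, hinv]
  simp only [map_add, map_mul, map_pow, map_one, map_ofNat, expand_C, expand_X]
  ring

/-- In `ℤ[x,y][[q]]`:
`∑_{(μ,ν)} m(μ) m(ν) x^{ℓ_d(μ)+ℓ_d(ν)} y^{2ℓ_r(μ,ν)} q^{|μ|+|ν|}
  = ∏_{m≥1} (1 + 2x q^{2m-1}/(1-q^{2m-1})² + x²y² q^{2(2m-1)}/(1-q^{2m-1})⁴)`. -/
theorem P2_eq_prod : P2 = prod2 := by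
  refine PowerSeries.ext fun n => ?_
  set s := (range (n + 1)).image (fun m => 2 * m + 1)
  have hs0 : 0 ∉ s := by simp [s]
  have hodds {k : ℕ} (hk : k ≤ n) : odds k = restricted k (· ∈ s) :=
    restricted_congr fun i _ hik => by
      simp only [s, mem_image, mem_range, Nat.not_even_iff_odd, Odd]
      constructor
      · rintro ⟨m, rfl⟩; exact ⟨m, by omega, by ring⟩
      · rintro ⟨m, -, rfl⟩; exact ⟨m, by ring⟩
  have hprod : ∏ m ∈ range (n + 1), factor2 (m + 1) =
      ∏ a ∈ s, subst (X ^ a) (diagSeries (pairWeight xv yv)) := by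
    rw [prod_image fun _ _ _ _ h => by omega]
    exact prod_congr rfl fun m _ => factor2_succ m
  rw [prod2, coeff_mk, hprod, ← diagSeries_pairSum _ hs0, diagSeries, coeff_mk, P2, coeff_mk,
    Finset.Nat.sum_antidiagonal_eq_sum_range_succ (pairSum (pairWeight xv yv) s)]
  refine sum_congr rfl fun k hk => ?_
  rw [hodds (by simp at hk; omega), hodds (Nat.sub_le n k), pairSum]
  exact sum_congr rfl fun μ hμ => sum_congr rfl fun ν hν => (prod_pairWeight_count
    (toFinset_parts_subset_of_mem_restricted hμ) (toFinset_parts_subset_of_mem_restricted hν)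
    _ _).symm
end

section
/- Let α, β be real numbers and set μ := α + β, ν := α − β. Then in ℝ[[q]]: (1 + 2∑_{n≥1} cos(4nα) q^{2n²})·(1 + 2∑_{n≥1} cos(4nβ) q^{2n²}) = (1 + 2∑_{n≥1} cos(4nμ) q^{4n²})·(1 + 2∑_{n≥1} cos(4nν) q^{4n²}) + 4·(∑_{n≥1} cos((4n−2)μ) q^{(2n−1)²})·(∑_{n≥1} cos((4n−2)ν) q^{(2n−1)²}). -/
/-!
Written as sums over `ℤ`, the factors are theta-type series:
`1 + 2∑_{n≥1} cos(4nα) q^{an²} = ∑_{m∈ℤ} cos(4mα) q^{am²}` (pair `m` with `-m`) and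
`2∑_{n≥1} cos((4n-2)μ) q^{(2n-1)²} = ∑_{m∈ℤ} cos((4m-2)μ) q^{(2m-1)²}` (pair `m` with `1 - m`).
Each product of two factors is then a sum over `ℤ²`; since the exponent is invariant under a
reflection of the second coordinate that flips the sign of the second angle, `cos a · cos b` may be
replaced by `cos (a + b)`. Finally `ℤ²` is the disjoint union of the points `(a + b, a - b)` and
`(a + b - 1, a - b)`, `(a, b) ∈ ℤ²`, and this substitution turns `2m² + 2n²` into `4a² + 4b²`
resp. `(2a - 1)² + (2b - 1)²`, and `4mα + 4nβ` into `4a(α + β) + 4b(α - β)`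
resp. `(4a - 2)(α + β) + (4b - 2)(α - β)`.
-/

/-- The formal power series `∑_{n ≥ 1} c(n) q^{e(n)}` in `ℝ[[q]]`, defined coefficientwise.
(For each exponent function `e` used here, any `n ≥ 1` with `e n = k` satisfies `n ≤ k + 1`,
so the truncated range captures every term.) -/
noncomputable def mkSum (e : ℕ → ℕ) (c : ℕ → ℝ) : PowerSeries ℝ :=
  PowerSeries.mk fun k => ∑ n ∈ Finset.range (k + 2), if 1 ≤ n ∧ e n = k then c n else 0

open PowerSeries Function Finset Real

section FiniteSublevels

variable {ι κ : Type*}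

def FiniteSublevels (d : ι → ℕ) : Prop := ∀ k, {i | d i ≤ k}.Finite

lemma FiniteSublevels.comp_injective {d : ι → ℕ} (hd : FiniteSublevels d) {f : κ → ι}
    (hf : Injective f) : FiniteSublevels (d ∘ f) :=
  fun k => (hd k).preimage hf.injOn

lemma FiniteSublevels.prod_add {d : ι → ℕ} {d' : κ → ℕ} (hd : FiniteSublevels d)
    (hd' : FiniteSublevels d') : FiniteSublevels fun p : ι × κ => d p.1 + d' p.2 :=
  fun k => ((hd k).prod (hd' k)).subset fun p (hp : d p.1 + d' p.2 ≤ k) =>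
    ⟨show d p.1 ≤ k by omega, show d' p.2 ≤ k by omega⟩

lemma finiteSublevels_of_natAbs_le {d : ℤ → ℕ} (h : ∀ m, m.natAbs ≤ d m) :
    FiniteSublevels d :=
  fun k => (Set.finite_Icc (-(k : ℤ)) k).subset fun m (hm : d m ≤ k) => by
    have := h m
    simp only [Set.mem_Icc]
    omega

lemma finiteSublevels_mul_natAbs_sq {a : ℕ} (ha : 1 ≤ a) :
    FiniteSublevels fun m : ℤ => a * m.natAbs ^ 2 :=
  finiteSublevels_of_natAbs_le fun _ =>
    (Nat.le_self_pow two_ne_zero _).trans (Nat.le_mul_of_pos_left _ ha)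

lemma finiteSublevels_natAbs_two_mul_sub_one_sq :
    FiniteSublevels fun m : ℤ => (2 * m - 1).natAbs ^ 2 :=
  finiteSublevels_of_natAbs_le fun m => le_trans (by omega) (Nat.le_self_pow two_ne_zero _)

end FiniteSublevels

section GenSeries

variable {ι κ R : Type*} [Semiring R]

/-- `∑ᵢ w i q^{d i}`. As `finsum` is `0` on infinite supports, this is the intended series only
when the fibres of `d` are finite, e.g. under `FiniteSublevels d`. -/
noncomputable def genSeries (d : ι → ℕ) (w : ι → R) : R⟦X⟧ :=
  PowerSeries.mk fun k => ∑ᶠ i, if d i = k then w i else 0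

lemma coeff_genSeries {d : ι → ℕ} {k : ℕ} (w : ι → R) (s : Finset ι)
    (hs : ∀ i, d i = k → i ∈ s) :
    coeff k (genSeries d w) = ∑ i ∈ s, if d i = k then w i else 0 := by
  rw [genSeries, coeff_mk]
  refine finsum_eq_finsetSum_of_support_subset _ fun i hi => hs i ?_
  by_contra h
  exact hi (if_neg h)

lemma genSeries_congr_equiv {d : ι → ℕ} {d' : κ → ℕ} {w : ι → R} {w' : κ → R} (e : ι ≃ κ)
    (hd : ∀ i, d' (e i) = d i) (hw : ∀ i, w' (e i) = w i) :
    genSeries d w = genSeries d' w' := by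
  ext k
  simp only [genSeries, coeff_mk, ← finsum_comp_equiv e, hd, hw]

lemma genSeries_unique [Unique ι] (d : ι → ℕ) (w : ι → R) :
    genSeries d w = monomial (d default) (w default) := by
  ext k
  simp [genSeries, coeff_monomial, finsum_unique, eq_comm]

lemma genSeries_sumElim {d : ι → ℕ} {d' : κ → ℕ} (hd : FiniteSublevels d)
    (hd' : FiniteSublevels d') (w : ι → R) (w' : κ → R) :
    genSeries (Sum.elim d d') (Sum.elim w w') = genSeries d w + genSeries d' w' := by
  ext k
  rw [map_add, coeff_genSeries w (hd k).toFinset (by simp +contextual),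
    coeff_genSeries w' (hd' k).toFinset (by simp +contextual),
    coeff_genSeries _ ((hd k).toFinset.disjSum (hd' k).toFinset)
      (by rintro (i | i) <;> simp +contextual),
    sum_disjSum]
  rfl

lemma genSeries_mul {d : ι → ℕ} {d' : κ → ℕ} (hd : FiniteSublevels d)
    (hd' : FiniteSublevels d') (w : ι → R) (w' : κ → R) :
    genSeries d w * genSeries d' w' =
      genSeries (fun p : ι × κ => d p.1 + d' p.2) fun p => w p.1 * w' p.2 := by
  ext k
  set s := (hd k).toFinset
  set s' := (hd' k).toFinset
  have hs (i : ι) : i ∈ s ↔ d i ≤ k := (hd k).mem_toFinset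
  have hs' (j : κ) : j ∈ s' ↔ d' j ≤ k := (hd' k).mem_toFinset
  rw [coeff_genSeries _ (s ×ˢ s')
      (fun p hp => mem_product.2 ⟨(hs _).2 (by omega), (hs' _).2 (by omega)⟩),
    coeff_mul, sum_product]
  calc ∑ p ∈ antidiagonal k, coeff p.1 (genSeries d w) * coeff p.2 (genSeries d' w')
      = ∑ p ∈ antidiagonal k, ∑ i ∈ s, ∑ j ∈ s',
          if (d i, d' j) = p then w i * w' j else 0 := by
        refine sum_congr rfl fun p hp => ?_
        rw [HasAntidiagonal.mem_antidiagonal] at hp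
        rw [coeff_genSeries w s (fun i hi => (hs i).2 (by omega)),
          coeff_genSeries w' s' (fun j hj => (hs' j).2 (by omega)), sum_mul_sum]
        simp only [ite_mul, mul_ite, zero_mul, mul_zero, ← ite_and, Prod.ext_iff, and_comm]
    _ = ∑ i ∈ s, ∑ j ∈ s', if d i + d' j = k then w i * w' j else 0 := by
        rw [sum_comm]
        refine sum_congr rfl fun i _ => ?_
        rw [sum_comm]
        simp only [sum_ite_eq, HasAntidiagonal.mem_antidiagonal]

lemma genSeries_nat {d : ℕ → ℕ} (hd : FiniteSublevels d) (w : ℕ → R) :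
    genSeries d w = monomial (d 0) (w 0) + genSeries (fun n => d (n + 1)) fun n => w (n + 1) := by
  rw [genSeries_congr_equiv Equiv.natEquivNatSumPUnit
      (d' := Sum.elim (fun n => d (n + 1)) fun _ => d 0)
      (w' := Sum.elim (fun n => w (n + 1)) fun _ => w 0) (by rintro (_ | n) <;> rfl)
      (by rintro (_ | n) <;> rfl),
    genSeries_sumElim (d := fun n => d (n + 1)) (hd.comp_injective Nat.succ_injective)
      (fun _ => Set.toFinite _),
    genSeries_unique (ι := PUnit.{1}), add_comm]

lemma genSeries_int {d : ℤ → ℕ} (hd : FiniteSublevels d) (w : ℤ → R) :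
    genSeries d w = genSeries (fun n : ℕ => d n) (fun n => w n) +
      genSeries (fun n : ℕ => d (-(n + 1))) fun n => w (-(n + 1)) := by
  rw [genSeries_congr_equiv Equiv.intEquivNatSumNat
      (d' := Sum.elim (fun n : ℕ => d n) fun n : ℕ => d (-(n + 1)))
      (w' := Sum.elim (fun n : ℕ => w n) fun n : ℕ => w (-(n + 1)))
      (by rintro (n | n) <;> rfl) (by rintro (n | n) <;> rfl),
    genSeries_sumElim (d := fun n : ℕ => d n) (d' := fun n : ℕ => d (-(n + 1)))
      (hd.comp_injective Nat.cast_injective) (hd.comp_injective fun m n h => by simpa using h)]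

lemma genSeries_int_of_neg_invariant {d : ℤ → ℕ} (hd : FiniteSublevels d) {w : ℤ → R}
    (hd₀ : ∀ m, d (-m) = d m) (hw₀ : ∀ m, w (-m) = w m) :
    genSeries d w =
      monomial (d 0) (w 0) + 2 * genSeries (fun n : ℕ => d (n + 1)) fun n => w (n + 1) := by
  rw [genSeries_int hd,
    genSeries_nat (d := fun n : ℕ => d n) (hd.comp_injective Nat.cast_injective)]
  simp only [Nat.cast_zero, Nat.cast_add, Nat.cast_one, hd₀, hw₀, two_mul, add_assoc]

lemma genSeries_int_of_one_sub_invariant {d : ℤ → ℕ} (hd : FiniteSublevels d) {w : ℤ → R}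
    (hd₁ : ∀ m, d (1 - m) = d m) (hw₁ : ∀ m, w (1 - m) = w m) :
    genSeries d w = 2 * genSeries (fun n : ℕ => d (n + 1)) fun n => w (n + 1) := by
  rw [genSeries_congr_equiv (Equiv.addRight (1 : ℤ)).symm (d' := fun m => d (m + 1))
      (w' := fun m => w (m + 1)) (fun m => by simp) (fun m => by simp),
    genSeries_int (d := fun m => d (m + 1)) (hd.comp_injective (add_left_injective 1))]
  have hd' (n : ℕ) : d (-(n + 1) + 1) = d (n + 1) := by rw [← hd₁]; ring_nf
  have hw' (n : ℕ) : w (-(n + 1) + 1) = w (n + 1) := by rw [← hw₁]; ring_nf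
  simp only [hd', hw', two_mul]

end GenSeries

lemma mkSum_eq_genSeries {e : ℕ → ℕ} (he : ∀ n, n ≤ e (n + 1)) (c : ℕ → ℝ) :
    mkSum e c = genSeries (fun n => e (n + 1)) fun n => c (n + 1) := by
  ext k
  have hs (n : ℕ) (hn : e (n + 1) = k) : n ∈ range (k + 1) := mem_range.2 (by have := he n; omega)
  rw [mkSum, coeff_mk, coeff_genSeries _ _ hs, sum_range_succ']
  simp

lemma one_add_two_mul_mkSum_eq_genSeries {a : ℕ} (ha : 1 ≤ a) (x : ℝ) :
    1 + 2 * mkSum (fun n => a * n ^ 2) (fun n => cos (4 * n * x)) =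
      genSeries (fun m : ℤ => a * m.natAbs ^ 2) fun m => cos (4 * m * x) := by
  rw [genSeries_int_of_neg_invariant (finiteSublevels_mul_natAbs_sq ha)
      (fun m => by simp) (fun m => by simp),
    mkSum_eq_genSeries (fun n => by nlinarith)]
  congr 2
  simp

lemma two_mul_mkSum_eq_genSeries (x : ℝ) :
    2 * mkSum (fun n => (2 * n - 1) ^ 2) (fun n => cos ((4 * n - 2) * x)) =
      genSeries (fun m : ℤ => (2 * m - 1).natAbs ^ 2) fun m => cos ((4 * m - 2) * x) := by
  rw [genSeries_int_of_one_sub_invariant finiteSublevels_natAbs_two_mul_sub_one_sq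
      (fun m => by rw [show 2 * (1 - m) - 1 = -(2 * m - 1) by ring, Int.natAbs_neg])
      (fun m => by rw [← cos_neg]; push_cast; ring_nf),
    mkSum_eq_genSeries (fun n => by
      have : n + 1 ≤ 2 * (n + 1) - 1 := by omega
      nlinarith)]
  congr 2
  funext n
  congr 1
  omega

lemma genSeries_cos_mul_cos {ι κ : Type*} {d : ι → ℕ} {d' : κ → ℕ} (hd : FiniteSublevels d)
    (hd' : FiniteSublevels d') (a : ι → ℝ) (b : κ → ℝ) (σ : κ ≃ κ)
    (hσd : ∀ j, d' (σ j) = d' j) (hσb : ∀ j, b (σ j) = -b j) :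
    genSeries d (fun i => cos (a i)) * genSeries d' (fun j => cos (b j)) =
      genSeries (fun p : ι × κ => d p.1 + d' p.2) fun p => cos (a p.1 + b p.2) := by
  rw [genSeries_mul hd hd']
  have hsym : genSeries (fun p : ι × κ => d p.1 + d' p.2) (fun p => cos (a p.1 - b p.2)) =
      genSeries (fun p : ι × κ => d p.1 + d' p.2) fun p => cos (a p.1 + b p.2) :=
    genSeries_congr_equiv ((Equiv.refl ι).prodCongr σ) (fun p => by simp [hσd])
      (fun p => by simp [hσb, sub_eq_add_neg])
  ext k
  set s := (hd.prod_add hd' k).toFinset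
  have hs : ∀ p : ι × κ, d p.1 + d' p.2 = k → p ∈ s := by simp +contextual [s]
  have hsymk := congrArg (coeff k) hsym
  rw [coeff_genSeries _ s hs, coeff_genSeries _ s hs] at hsymk ⊢
  calc ∑ p ∈ s, (if d p.1 + d' p.2 = k then cos (a p.1) * cos (b p.2) else 0)
      = ((∑ p ∈ s, if d p.1 + d' p.2 = k then cos (a p.1 - b p.2) else 0) +
          ∑ p ∈ s, if d p.1 + d' p.2 = k then cos (a p.1 + b p.2) else 0) / 2 := by
        rw [← sum_add_distrib, sum_div]
        refine sum_congr rfl fun p _ => ?_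
        split_ifs
        · linarith [two_mul_cos_mul_cos (a p.1) (b p.2)]
        · simp
    _ = ∑ p ∈ s, if d p.1 + d' p.2 = k then cos (a p.1 + b p.2) else 0 := by
        rw [hsymk]; ring

def evenOddEquiv : (ℤ × ℤ) ⊕ (ℤ × ℤ) ≃ ℤ × ℤ where
  toFun := Sum.elim (fun p => (p.1 + p.2, p.1 - p.2)) fun p => (p.1 + p.2 - 1, p.1 - p.2)
  invFun p := if 2 ∣ p.1 + p.2 then .inl ((p.1 + p.2) / 2, (p.1 - p.2) / 2)
    else .inr ((p.1 + p.2 + 1) / 2, (p.1 - p.2 + 1) / 2)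
  left_inv := by
    rintro (⟨a, b⟩ | ⟨a, b⟩)
    · dsimp only [Sum.elim_inl]
      rw [if_pos (by omega)]
      congr 2 <;> omega
    · dsimp only [Sum.elim_inr]
      rw [if_neg (by omega)]
      congr 2 <;> omega
  right_inv := by
    rintro ⟨m, n⟩
    dsimp only
    split_ifs
    · dsimp only [Sum.elim_inl]
      congr 1 <;> omega
    · dsimp only [Sum.elim_inr]
      congr 1 <;> omega

lemma genSeries_cos_evenOdd_split (α β : ℝ) :
    (genSeries (fun p : ℤ × ℤ => 2 * p.1.natAbs ^ 2 + 2 * p.2.natAbs ^ 2)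
      fun p => cos (4 * p.1 * α + 4 * p.2 * β)) =
    (genSeries (fun p : ℤ × ℤ => 4 * p.1.natAbs ^ 2 + 4 * p.2.natAbs ^ 2)
      fun p => cos (4 * p.1 * (α + β) + 4 * p.2 * (α - β))) +
    genSeries (fun p : ℤ × ℤ => (2 * p.1 - 1).natAbs ^ 2 + (2 * p.2 - 1).natAbs ^ 2)
      fun p => cos ((4 * p.1 - 2) * (α + β) + (4 * p.2 - 2) * (α - β)) := by
  have h4 := finiteSublevels_mul_natAbs_sq (a := 4) (by norm_num)
  have hodd := finiteSublevels_natAbs_two_mul_sub_one_sq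
  rw [← genSeries_sumElim (h4.prod_add h4) (hodd.prod_add hodd)]
  refine (genSeries_congr_equiv evenOddEquiv ?_ ?_).symm
  all_goals
    rintro (⟨a, b⟩ | ⟨a, b⟩) <;>
      simp only [evenOddEquiv, Equiv.coe_fn_mk, Sum.elim_inl, Sum.elim_inr]
  · zify; simp only [sq_abs]; ring
  · zify; simp only [sq_abs]; ring
  · congr 1; push_cast; ring
  · congr 1; push_cast; ring

/-- For real `α, β` with `μ := α + β` and `ν := α - β`, in `ℝ[[q]]`:
`(1 + 2∑ cos(4nα) q^{2n²})(1 + 2∑ cos(4nβ) q^{2n²})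
  = (1 + 2∑ cos(4nμ) q^{4n²})(1 + 2∑ cos(4nν) q^{4n²})
    + 4 (∑ cos((4n-2)μ) q^{(2n-1)²})(∑ cos((4n-2)ν) q^{(2n-1)²})`. -/
theorem cos_dissection_even (α β : ℝ) :
    (1 + 2 * mkSum (fun n => 2 * n ^ 2) fun n => Real.cos (4 * n * α)) *
      (1 + 2 * mkSum (fun n => 2 * n ^ 2) fun n => Real.cos (4 * n * β)) =
    (1 + 2 * mkSum (fun n => 4 * n ^ 2) fun n => Real.cos (4 * n * (α + β))) *
      (1 + 2 * mkSum (fun n => 4 * n ^ 2) fun n => Real.cos (4 * n * (α - β))) +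
    4 * ((mkSum (fun n => (2 * n - 1) ^ 2) fun n => Real.cos ((4 * n - 2) * (α + β))) *
      (mkSum (fun n => (2 * n - 1) ^ 2) fun n => Real.cos ((4 * n - 2) * (α - β)))) := by
  have h2 := finiteSublevels_mul_natAbs_sq (a := 2) (by norm_num)
  have h4 := finiteSublevels_mul_natAbs_sq (a := 4) (by norm_num)
  have hodd := finiteSublevels_natAbs_two_mul_sub_one_sq
  rw [show (4 : ℝ⟦X⟧) = 2 * 2 by norm_num, mul_mul_mul_comm,
    one_add_two_mul_mkSum_eq_genSeries (a := 2) (by norm_num),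
    one_add_two_mul_mkSum_eq_genSeries (a := 2) (by norm_num),
    one_add_two_mul_mkSum_eq_genSeries (a := 4) (by norm_num),
    one_add_two_mul_mkSum_eq_genSeries (a := 4) (by norm_num),
    two_mul_mkSum_eq_genSeries, two_mul_mkSum_eq_genSeries,
    genSeries_cos_mul_cos h2 h2 _ _ (Equiv.neg ℤ) (fun _ => by simp) (fun _ => by simp),
    genSeries_cos_mul_cos h4 h4 _ _ (Equiv.neg ℤ) (fun _ => by simp) (fun _ => by simp),
    genSeries_cos_mul_cos hodd hodd _ _ (Equiv.subLeft 1)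
      (fun m => by rw [Equiv.subLeft_apply, show 2 * (1 - m) - 1 = -(2 * m - 1) by ring,
        Int.natAbs_neg])
      (fun m => by rw [Equiv.subLeft_apply]; push_cast; ring)]
  exact genSeries_cos_evenOdd_split α β
end
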